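/- arXiv:2010.11094 — 4 statements merged into one kernel-verified Lean document; each statement's English description precedes it below -/
import Mathlib

section
/- Let X be a nonempty compact metric space, let f : X → X be a continuous map, let x₀ ∈ X, and let Y = ω(x₀) be the ω-limit set of x₀ under f. Then there is no subset U ⊆ Y that is open in the subspace topology of Y, nonempty, and a proper subset of Y, such that f maps the closure of U in Y into U. Equivalently: if U ⊆ Y is nonempty, open in Y, and f(cl_Y(U)) ⊆ U, then U = Y. -/
/-!
Suppose `U ≠ Y` and let `K = cl U ∩ Y`. The compact sets `f K ⊆ U` and `Y \ U` are disjoint, so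
they have disjoint open neighbourhoods `P` and `Q`. The orbit eventually stays in the neighbourhood
`f⁻¹ P ∪ Q` of `Y` and visits `f⁻¹ P ⊇ U` at arbitrarily late times; once it is in `f⁻¹ P`, its next
point lies in `P`, hence outside `Q`, hence again in `f⁻¹ P`. So the orbit eventually avoids `Q`,
which contradicts the fact that the points of `Y \ U ⊆ Q` are ω-limit points.
-/

open Set Filter Topology Function

theorem IsClosed.diff_of_isOpen_preimage_val {X : Type*} [TopologicalSpace X] {Y U : Set X}
    (hY : IsClosed Y) (hU : IsOpen (Subtype.val ⁻¹' U : Set Y)) : IsClosed (Y \ U) := by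
  rw [sdiff_eq, ← Subtype.image_preimage_coe, preimage_compl]
  exact hY.isClosedMap_subtype_val _ hU.isClosed_compl

theorem eventually_iterate_mem_diff_of_mapsTo_compl {α : Type*} {f : α → α} {x₀ : α}
    {G Q : Set α} (hfG : MapsTo f G Qᶜ) (hev : ∀ᶠ n in atTop, f^[n] x₀ ∈ G ∪ Q)
    (hfreq : ∃ᶠ n in atTop, f^[n] x₀ ∈ G) : ∀ᶠ n in atTop, f^[n] x₀ ∈ G \ Q := by
  obtain ⟨N, hN⟩ := eventually_atTop.1 hev
  obtain ⟨n₀, hn₀N, hn₀G⟩ := frequently_atTop.1 hfreq N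
  have step : ∀ n ≥ N, f^[n] x₀ ∈ G → f^[n + 1] x₀ ∈ G \ Q := fun n hn hG ↦ by
    have hQ : f^[n + 1] x₀ ∉ Q := by
      rw [iterate_succ_apply']
      exact hfG hG
    exact ⟨(hN _ (by omega)).resolve_right hQ, hQ⟩
  refine eventually_atTop.2 ⟨n₀ + 1, fun n hn ↦ ?_⟩
  induction n, hn using Nat.le_induction with
  | base => exact step n₀ hn₀N hn₀G
  | succ n hn ih => exact step n (by omega) ih.1

theorem eq_omegaLimit_of_image_closure_inter_subset {X : Type*} [TopologicalSpace X]
    [CompactSpace X] [T2Space X] {f : X → X} (hf : Continuous f) {x₀ : X} {U : Set X}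
    (hUY : U ⊆ omegaLimit atTop (fun n x ↦ f^[n] x) {x₀}) (hUne : U.Nonempty)
    (hUopen : IsOpen (Subtype.val ⁻¹' U : Set (omegaLimit atTop (fun n x ↦ f^[n] x) {x₀})))
    (hmap : f '' (closure U ∩ omegaLimit atTop (fun n x ↦ f^[n] x) {x₀}) ⊆ U) :
    U = omegaLimit atTop (fun n x ↦ f^[n] x) {x₀} := by
  set Y := omegaLimit atTop (fun n x ↦ f^[n] x) {x₀}
  have frequently_mem : ∀ y ∈ Y, ∀ s ∈ 𝓝 y, ∃ᶠ n in atTop, f^[n] x₀ ∈ s := fun y hy ↦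
    mapClusterPt_iff_frequently.1 ((mem_omegaLimit_singleton_iff_mapClusterPt _ _ _ _).1 hy)
  by_contra hne
  obtain ⟨z, hzY, hzU⟩ : (Y \ U).Nonempty := sdiff_nonempty.2 fun h ↦ hne (hUY.antisymm h)
  have hYc : IsClosed Y := isClosed_omegaLimit _ _ _
  have hK : IsCompact (closure U ∩ Y) := (isClosed_closure.inter hYc).isCompact
  obtain ⟨P, Q, hP, hQ, hKP, hAQ, hPQ⟩ := SeparatedNhds.of_isCompact_isCompact (hK.image hf)
    (hYc.diff_of_isOpen_preimage_val hUopen).isCompact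
    (disjoint_sdiff_right.mono_left hmap)
  have hUG : U ⊆ f ⁻¹' P := fun u hu ↦ hKP ⟨u, ⟨subset_closure hu, hUY hu⟩, rfl⟩
  have hYGQ : Y ⊆ f ⁻¹' P ∪ Q := fun y hy ↦
    (em (y ∈ U)).imp (fun h ↦ hUG h) fun h ↦ hAQ ⟨hy, h⟩
  have hev : ∀ᶠ n in atTop, f^[n] x₀ ∈ f ⁻¹' P ∪ Q :=
    (eventually_mapsTo_of_isOpen_of_omegaLimit_subset atTop _ {x₀}
      ((hP.preimage hf).union hQ) hYGQ).mono fun n hn ↦ hn rfl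
  obtain ⟨u, hu⟩ := hUne
  have hfreq := frequently_mem u (hUY hu) _ ((hP.preimage hf).mem_nhds (hUG hu))
  have htrap := eventually_iterate_mem_diff_of_mapsTo_compl
    ((mapsTo_preimage f P).mono_right hPQ.subset_compl_right) hev hfreq
  exact frequently_mem z hzY Q (hQ.mem_nhds (hAQ ⟨hzY, hzU⟩)) (htrap.mono fun _ hn ↦ hn.2)

theorem omegaLimit_no_trapping_open_subset_general
    {X : Type*} [MetricSpace X] [CompactSpace X]
    (f : X → X) (hf : Continuous f) (x₀ : X)
    (Y : Set X) (hY : Y = ⋂ N : ℕ, closure ((fun n => f^[n] x₀) '' Set.Ici N))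
    (U : Set X) (hUY : U ⊆ Y) (hUne : U.Nonempty)
    (hUopen : IsOpen ((Subtype.val ⁻¹' U : Set Y)))
    (hmap : f '' (closure U ∩ Y) ⊆ U) :
    U = Y := by
  obtain rfl : Y = omegaLimit atTop (fun n x ↦ f^[n] x) {x₀} := by
    ext y
    rw [mem_omegaLimit_singleton_iff_mapClusterPt, mapClusterPt_atTop_iff_forall_mem_closure, hY,
      mem_iInter]
  exact eq_omegaLimit_of_image_closure_inter_subset hf hUY hUne hUopen hmap

/-- **Bowen's lemma for ω-limit sets (non-invertible version).**
Let `X` be a nonempty compact metric space, `f : X → X` continuous, `x₀ ∈ X`, and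
`Y = ω(x₀)` the ω-limit set of `x₀`, i.e. `Y = ⋂ N, closure { f^[n] x₀ : n ≥ N }`.
If `U ⊆ Y` is nonempty, open in the subspace topology of `Y`, and `f` maps the
closure of `U` in `Y` (which equals `closure U ∩ Y` since `Y` is closed) into `U`,
then `U = Y`. -/
theorem omegaLimit_no_trapping_open_subset
    {X : Type*} [MetricSpace X] [CompactSpace X] [Nonempty X]
    (f : X → X) (hf : Continuous f) (x₀ : X)
    (Y : Set X) (hY : Y = ⋂ N : ℕ, closure ((fun n => f^[n] x₀) '' Set.Ici N))
    (U : Set X) (hUY : U ⊆ Y) (hUne : U.Nonempty)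
    (hUopen : IsOpen ((Subtype.val ⁻¹' U : Set Y)))
    (hmap : f '' (closure U ∩ Y) ⊆ U) :
    U = Y :=
  omegaLimit_no_trapping_open_subset_general f hf x₀ Y hY U hUY hUne hUopen hmap
end

section
/- Let X be a nonempty compact metric space, let f : X → X be a continuous map, and let x₀ ∈ X. If the ω-limit set ω(x₀) is a finite set, then ω(x₀) consists of a single periodic cycle: there exist a point p ∈ ω(x₀) and an integer n ≥ 1 such that f^n(p) = p and ω(x₀) = { p, f(p), f²(p), …, f^{n-1}(p) }. -/
/-!
Separate the finitely many points of `ω(x₀)` by pairwise disjoint open sets `U y`. By compactness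
the orbit eventually stays in the union of the neighbourhoods `U y ∩ f⁻¹(U (f y))`, and
disjointness forces the index `y` of the neighbourhood containing `f^[n] x₀` to advance by `f` at
each step. So the tail of the orbit is shadowed by the orbit of a single point `p ∈ ω(x₀)`; since it
comes back near every point of `ω(x₀)` infinitely often, `ω(x₀)` is the orbit of `p`, which is
therefore periodic.
-/

open Filter Topology Set Function

theorem Function.IsPeriodicPt.image_Iio_eq_range {X : Type*} {f : X → X} {n : ℕ} {p : X}
    (hper : IsPeriodicPt f n p) (hn : 0 < n) :
    (fun k => f^[k] p) '' Iio n = range (fun k => f^[k] p) := by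
  refine (image_subset_range _ _).antisymm ?_
  rintro _ ⟨k, rfl⟩
  exact ⟨k % n, Nat.mod_lt k hn, hper.iterate_mod_apply k⟩

theorem iterate_mem_iterate_of_pairwiseDisjoint {X : Type*} {f : X → X} {Y : Set X}
    {U : X → Set X} (hmaps : MapsTo f Y Y) (hdisj : Y.PairwiseDisjoint U) {x p : X}
    (hx : ∀ k, ∃ y ∈ Y, f^[k] x ∈ U y ∩ f ⁻¹' U (f y)) (hp : p ∈ Y) (hxp : x ∈ U p) :
    ∀ k, f^[k] x ∈ U (f^[k] p) := by
  intro k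
  induction k with
  | zero => exact hxp
  | succ k ih =>
    obtain ⟨y, hy, hxy, hfxy⟩ := hx k
    have hyk : y = f^[k] p := hdisj.elim_set hy (hmaps.iterate k hp) _ hxy ih
    rw [iterate_succ_apply', iterate_succ_apply']
    rwa [hyk] at hfxy

section

variable {X : Type*} [TopologicalSpace X]

theorem iInter_closure_image_Ici_eq_setOf_mapClusterPt (u : ℕ → X) :
    ⋂ N : ℕ, closure (u '' Ici N) = {y | MapClusterPt y atTop u} := by
  ext y
  simp only [mem_iInter, mem_ofPred_eq, mapClusterPt_atTop_iff_forall_mem_closure]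

theorem mapsTo_setOf_mapClusterPt_iterate {f : X → X} (hf : Continuous f) (x₀ : X) :
    MapsTo f {y | MapClusterPt y atTop (f^[·] x₀)} {y | MapClusterPt y atTop (f^[·] x₀)} := by
  intro y hy
  have hshift : f ∘ (f^[·] x₀) = (f^[·] x₀) ∘ (· + 1) := by
    funext n
    exact (iterate_succ_apply' f n x₀).symm
  have hy' : MapClusterPt (f y) atTop (f ∘ (f^[·] x₀)) := hy.continuousAt_comp hf.continuousAt
  rw [hshift] at hy'
  exact hy'.of_comp (tendsto_add_atTop_nat 1)

theorem eventually_exists_mapClusterPt_mem [CompactSpace X] {ι : Type*} {l : Filter ι}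
    (u : ι → X) {V : X → Set X} (hV : ∀ y, V y ∈ 𝓝 y) :
    ∀ᶠ i in l, ∃ y, MapClusterPt y l u ∧ u i ∈ V y := by
  have hattr : Tendsto u l (𝓝ˢ {y | MapClusterPt y l u}) :=
    isCompact_univ.tendsto_nhdsSet_of_mapClusterPt (univ_mem' fun _ => mem_univ _)
      fun _ _ hy => hy
  have hmem : (⋃ y ∈ {y | MapClusterPt y l u}, V y) ∈ 𝓝ˢ {y | MapClusterPt y l u} :=
    mem_nhdsSet_iff_forall.2 fun y hy => mem_of_superset (hV y) (subset_biUnion_of_mem hy)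
  filter_upwards [hattr hmem] with i hi
  simpa only [mem_preimage, mem_iUnion, exists_prop] using hi

theorem exists_forall_eq_iterate_of_finite_setOf_mapClusterPt [T2Space X] [CompactSpace X]
    {f : X → X} (hf : Continuous f) (x₀ : X)
    (hfin : {y | MapClusterPt y atTop (f^[·] x₀)}.Finite) :
    ∃ p, MapClusterPt p atTop (f^[·] x₀) ∧
      ∀ y, MapClusterPt y atTop (f^[·] x₀) → ∃ k, 0 < k ∧ f^[k] p = y := by
  set Y := {y | MapClusterPt y atTop (f^[·] x₀)}
  have hmaps : MapsTo f Y Y := mapsTo_setOf_mapClusterPt_iterate hf x₀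
  obtain ⟨U, hU, hdisj⟩ := hfin.t2_separation
  set V : X → Set X := fun y => U y ∩ f ⁻¹' U (f y)
  have hV : ∀ y, V y ∈ 𝓝 y := fun y =>
    ((hU y).2.inter ((hU (f y)).2.preimage hf)).mem_nhds ⟨(hU y).1, (hU (f y)).1⟩
  obtain ⟨N, hN⟩ := eventually_atTop.1 (eventually_exists_mapClusterPt_mem (f^[·] x₀) hV)
  obtain ⟨p, hp, hxp, -⟩ := hN N le_rfl
  have hshadow : ∀ k, f^[k] (f^[N] x₀) ∈ U (f^[k] p) := by
    refine iterate_mem_iterate_of_pairwiseDisjoint hmaps hdisj (fun k => ?_) hp hxp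
    rw [← iterate_add_apply]
    exact hN (k + N) (Nat.le_add_left N k)
  refine ⟨p, hp, fun y hy => ?_⟩
  obtain ⟨n, hn, hyn, -⟩ := frequently_atTop.1 (hy.frequently (hV y)) (N + 1)
  obtain ⟨k, rfl⟩ := Nat.exists_eq_add_of_le hn
  rw [show N + 1 + k = k + 1 + N by omega, iterate_add_apply] at hyn
  exact ⟨k + 1, k.succ_pos, hdisj.elim_set (hmaps.iterate _ hp) hy _ (hshadow (k + 1)) hyn⟩

end

theorem omegaLimit_finite_is_periodic_cycle_general
    {X : Type*} [MetricSpace X] [CompactSpace X]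
    (f : X → X) (hf : Continuous f) (x₀ : X)
    (Y : Set X) (hY : Y = ⋂ N : ℕ, closure ((fun n => f^[n] x₀) '' Set.Ici N))
    (hfin : Y.Finite) :
    ∃ p ∈ Y, ∃ n : ℕ, 1 ≤ n ∧ f^[n] p = p ∧ Y = (fun k => f^[k] p) '' Set.Iio n := by
  rw [iInter_closure_image_Ici_eq_setOf_mapClusterPt] at hY
  subst hY
  obtain ⟨p, hp, hreturn⟩ := exists_forall_eq_iterate_of_finite_setOf_mapClusterPt hf x₀ hfin
  obtain ⟨n, hn, hper⟩ := hreturn p hp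
  refine ⟨p, hp, n, hn, hper, ?_⟩
  rw [IsPeriodicPt.image_Iio_eq_range hper hn]
  have hmaps := mapsTo_setOf_mapClusterPt_iterate hf x₀
  refine Subset.antisymm (fun y hy => ?_) (range_subset_iff.2 fun k => hmaps.iterate k hp)
  obtain ⟨k, -, hk⟩ := hreturn y hy
  exact ⟨k, hk⟩

/-- If the ω-limit set `Y = ω(x₀)` of a point `x₀` under a continuous map `f` of a
nonempty compact metric space is finite, then it consists of a single periodic cycle:
there are `p ∈ Y` and `n ≥ 1` with `f^[n] p = p` and
`Y = { p, f p, f² p, …, f^[n-1] p }`. -/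
theorem omegaLimit_finite_is_periodic_cycle
    {X : Type*} [MetricSpace X] [CompactSpace X] [Nonempty X]
    (f : X → X) (hf : Continuous f) (x₀ : X)
    (Y : Set X) (hY : Y = ⋂ N : ℕ, closure ((fun n => f^[n] x₀) '' Set.Ici N))
    (hfin : Y.Finite) :
    ∃ p ∈ Y, ∃ n : ℕ, 1 ≤ n ∧ f^[n] p = p ∧ Y = (fun k => f^[k] p) '' Set.Iio n :=
  omegaLimit_finite_is_periodic_cycle_general f hf x₀ Y hY hfin
end

section
/- Let U ⊆ ℂ² be an open neighborhood of (0,0), let G, H : U → ℂ be holomorphic (complex analytic) functions with G(0,0) = 0, H(0,0) = 0 and with the total (Fréchet) derivative of H vanishing at (0,0), and let λ, a ∈ ℂ with |λ| > 1. Let ψ be a holomorphic function on an open disk {x ∈ ℂ : |x| < ε₀} with ψ(0) = 0, whose graph {(x, ψ(x)) : |x| < ε₀} is contained in U, and suppose that for all |x| < ε₀ the following two identities hold: (i) λ·ψ(x) + a·x + H(x, ψ(x)) = 0, and (ii) ∂G/∂x(x, ψ(x)) · (λ + ∂H/∂y(x, ψ(x))) − ∂G/∂y(x, ψ(x)) ·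 (a + ∂H/∂x(x, ψ(x))) = 0. Then there exists ε > 0 such that G(x, ψ(x)) = 0 for all |x| < ε. -/
/-!
Along the graph, `g x = G (x, ψ x)` has derivative `G_x + ψ' G_y`. Differentiating (i) gives
`ψ' (λ + H_y) = -(a + H_x)`, so `(λ + H_y) g' = G_x (λ + H_y) - G_y (a + H_x)`, which vanishes
by (ii). Since `dH(0,0) = 0`, Cauchy's estimate on the slices `t ↦ H (x, t)` shows `H_y → 0` at
the origin, so `λ + H_y ≠ 0` near `0`. Hence `g' = 0` on a disk, and `g` is constant there, equal
to `g 0 = G (0, 0) = 0`.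
-/

open Metric Filter Topology

section PartialDerivatives

variable {𝕜 F : Type*} [NontriviallyNormedField 𝕜] [NormedAddCommGroup F] [NormedSpace 𝕜 F]
  {G : 𝕜 × 𝕜 → F}

theorem deriv_slice_fst_eq_fderiv {x y : 𝕜} (hG : DifferentiableAt 𝕜 G (x, y)) :
    deriv (fun t => G (t, y)) x = fderiv 𝕜 G (x, y) (1, 0) :=
  (hG.hasFDerivAt.comp_hasDerivAt x ((hasDerivAt_id x).prodMk (hasDerivAt_const x y))).deriv

theorem deriv_slice_snd_eq_fderiv {x y : 𝕜} (hG : DifferentiableAt 𝕜 G (x, y)) :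
    deriv (fun t => G (x, t)) y = fderiv 𝕜 G (x, y) (0, 1) :=
  (hG.hasFDerivAt.comp_hasDerivAt y ((hasDerivAt_const y x).prodMk (hasDerivAt_id y))).deriv

theorem hasDerivAt_comp_graph {ψ : 𝕜 → 𝕜} {x : 𝕜}
    (hG : DifferentiableAt 𝕜 G (x, ψ x)) (hψ : DifferentiableAt 𝕜 ψ x) :
    HasDerivAt (fun t => G (t, ψ t))
      (deriv (fun t => G (t, ψ x)) x + deriv ψ x • deriv (fun t => G (x, t)) (ψ x)) x := by
  have hsplit : ((1 : 𝕜), deriv ψ x) = (1, 0) + deriv ψ x • (0, 1) := by simp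
  rw [deriv_slice_fst_eq_fderiv hG, deriv_slice_snd_eq_fderiv hG, ← map_smul, ← map_add,
    ← hsplit]
  exact hG.hasFDerivAt.comp_hasDerivAt x ((hasDerivAt_id x).prodMk hψ.hasDerivAt)

end PartialDerivatives

theorem tendsto_deriv_slice_snd_of_hasFDerivAt_zero {E F : Type*} [NormedAddCommGroup E]
    [NormedSpace ℂ E] [NormedAddCommGroup F] [NormedSpace ℂ F] {H : E × ℂ → F}
    (hd : ∀ᶠ p in 𝓝 0, DifferentiableAt ℂ H p)
    (hH : HasFDerivAt H (0 : E × ℂ →L[ℂ] F) 0) :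
    Tendsto (fun p : E × ℂ => deriv (fun t => H (p.1, t)) p.2) (𝓝 0) (𝓝 0) := by
  rw [Metric.tendsto_nhds]
  intro η hη
  have hsmall : ∀ᶠ p in 𝓝 (0 : E × ℂ), ‖H p - H 0‖ ≤ η / 4 * ‖p‖ := by
    simpa using hH.isLittleO.def (by positivity : 0 < η / 4)
  obtain ⟨δ, hδ, hball⟩ := Metric.eventually_nhds_iff_ball.mp (hd.and hsmall)
  filter_upwards [ball_mem_nhds 0 (half_pos hδ)] with p hp
  obtain ⟨x, y⟩ := p
  rw [mem_ball_zero_iff, Prod.norm_def, max_lt_iff] at hp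
  have hslice : ∀ t ∈ closedBall y (δ / 2), (x, t) ∈ ball (0 : E × ℂ) δ := by
    intro t ht
    rw [mem_closedBall, dist_eq_norm] at ht
    rw [mem_ball_zero_iff, Prod.norm_def, max_lt_iff]
    refine ⟨by linarith, ?_⟩
    calc ‖t‖ ≤ ‖t - y‖ + ‖y‖ := norm_le_norm_sub_add t y
      _ < δ := by linarith
  have hdiff : DiffContOnCl ℂ (fun t => H (x, t) - H 0) (ball y (δ / 2)) := by
    refine DifferentiableOn.diffContOnCl_ball (U := closedBall y (δ / 2)) ?_ subset_rfl
    intro t ht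
    exact (((hball _ (hslice t ht)).1.comp t
      ((hasDerivAt_const t x).prodMk (hasDerivAt_id t)).differentiableAt).sub_const _)
      |>.differentiableWithinAt
  have hbound : ∀ t ∈ sphere y (δ / 2), ‖H (x, t) - H 0‖ ≤ η / 4 * δ := by
    intro t ht
    have hmem := hslice t (sphere_subset_closedBall ht)
    calc ‖H (x, t) - H 0‖ ≤ η / 4 * ‖(x, t)‖ := (hball _ hmem).2
      _ ≤ η / 4 * δ := by
        gcongr
        exact (mem_ball_zero_iff.mp hmem).le
  have hcauchy := Complex.norm_deriv_le_of_forall_mem_sphere_norm_le (half_pos hδ) hdiff hbound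
  rw [deriv_sub_const] at hcauchy
  rw [dist_zero_right]
  calc _ ≤ η / 4 * δ / (δ / 2) := hcauchy
    _ = η / 2 := by field_simp; ring
    _ < η := half_lt_self hη

theorem hasDerivAt_comp_graph_eq_zero {𝕜 : Type*} [NontriviallyNormedField 𝕜]
    {G H : 𝕜 × 𝕜 → 𝕜} {ψ : 𝕜 → 𝕜} {lam a x : 𝕜}
    (hG : DifferentiableAt 𝕜 G (x, ψ x)) (hH : DifferentiableAt 𝕜 H (x, ψ x))
    (hψ : DifferentiableAt 𝕜 ψ x)
    (hi : (fun t => lam * ψ t + a * t + H (t, ψ t)) =ᶠ[𝓝 x] fun _ => 0)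
    (hii : deriv (fun t => G (t, ψ x)) x * (lam + deriv (fun t => H (x, t)) (ψ x))
        - deriv (fun t => G (x, t)) (ψ x) * (a + deriv (fun t => H (t, ψ x)) x) = 0)
    (hne : lam + deriv (fun t => H (x, t)) (ψ x) ≠ 0) :
    HasDerivAt (fun t => G (t, ψ t)) 0 x := by
  have hi_deriv : lam * deriv ψ x + a + (deriv (fun t => H (t, ψ x)) x
      + deriv ψ x * deriv (fun t => H (x, t)) (ψ x)) = 0 := by
    have hlhs := ((hψ.hasDerivAt.const_mul lam).add ((hasDerivAt_id x).const_mul a)).add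
      (hasDerivAt_comp_graph hH hψ)
    simpa using (hlhs.congr_of_eventuallyEq hi.symm).unique (hasDerivAt_const x 0)
  have hslope : deriv (fun t => G (t, ψ x)) x
      + deriv ψ x * deriv (fun t => G (x, t)) (ψ x) = 0 := by
    refine (mul_eq_zero.mp ?_).resolve_left hne
    linear_combination hii + deriv (fun t => G (x, t)) (ψ x) * hi_deriv
  simpa [hslope] using hasDerivAt_comp_graph hG hψ

theorem exists_ball_eq_of_eventually_hasDerivAt_zero {𝕜 F : Type*} [RCLike 𝕜]
    [NormedAddCommGroup F] [NormedSpace 𝕜 F] {f : 𝕜 → F} {c : 𝕜}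
    (hf : ∀ᶠ x in 𝓝 c, HasDerivAt f 0 x) : ∃ ε > 0, ∀ x ∈ ball c ε, f x = f c := by
  obtain ⟨ε, hε, hflat⟩ := Metric.eventually_nhds_iff_ball.mp hf
  exact ⟨ε, hε, fun x hx => isOpen_ball.is_const_of_deriv_eq_zero
    (convex_ball c ε).isPreconnected
    (fun t ht => (hflat t ht).differentiableAt.differentiableWithinAt)
    (fun t ht => (hflat t ht).deriv) hx (mem_ball_self hε)⟩

theorem critical_graph_in_zero_locus_general
    (U : Set (ℂ × ℂ)) (hU : IsOpen U)
    (G H : ℂ × ℂ → ℂ)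
    (hG : DifferentiableOn ℂ G U) (hH : DifferentiableOn ℂ H U)
    (hG0 : G (0, 0) = 0)
    (hH'0 : fderiv ℂ H (0, 0) = 0)
    (lam a : ℂ) (hlam : 1 < ‖lam‖)
    (ε₀ : ℝ) (hε₀ : 0 < ε₀)
    (ψ : ℂ → ℂ) (hψ : DifferentiableOn ℂ ψ (ball (0 : ℂ) ε₀))
    (hψ0 : ψ 0 = 0)
    (hgraph : ∀ x ∈ ball (0 : ℂ) ε₀, (x, ψ x) ∈ U)
    (hi : ∀ x ∈ ball (0 : ℂ) ε₀, lam * ψ x + a * x + H (x, ψ x) = 0)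
    (hii : ∀ x ∈ ball (0 : ℂ) ε₀,
      deriv (fun t => G (t, ψ x)) x * (lam + deriv (fun t => H (x, t)) (ψ x))
        - deriv (fun t => G (x, t)) (ψ x) * (a + deriv (fun t => H (t, ψ x)) x) = 0) :
    ∃ ε > 0, ∀ x ∈ ball (0 : ℂ) ε, G (x, ψ x) = 0 := by
  have hball : ∀ᶠ x in 𝓝 (0 : ℂ), x ∈ ball 0 ε₀ := ball_mem_nhds 0 hε₀
  have hgraph_cont : Tendsto (fun x => (x, ψ x)) (𝓝 0) (𝓝 (0, 0)) := by
    simpa [hψ0] using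
      (continuousAt_id.prodMk (hψ.continuousOn.continuousAt (ball_mem_nhds 0 hε₀))).tendsto
  have hU0 : U ∈ 𝓝 ((0 : ℂ), (0 : ℂ)) := by
    simpa [hψ0] using hU.mem_nhds (hgraph 0 (mem_ball_self hε₀))
  have hHy : Tendsto (fun x => deriv (fun t => H (x, t)) (ψ x)) (𝓝 0) (𝓝 0) := by
    refine (tendsto_deriv_slice_snd_of_hasFDerivAt_zero ?_ ?_).comp hgraph_cont
    · exact eventually_of_mem hU0 fun p hp => hH.differentiableAt (hU.mem_nhds hp)
    · exact hH'0 ▸ (hH.differentiableAt hU0).hasFDerivAt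
  have hne : ∀ᶠ x in 𝓝 0, lam + deriv (fun t => H (x, t)) (ψ x) ≠ 0 := by
    have hlam0 : ‖(0 : ℂ)‖ < ‖lam‖ := by rw [norm_zero]; linarith
    filter_upwards [hHy.norm.eventually_lt_const hlam0] with x hx h
    simp [eq_neg_of_add_eq_zero_left h] at hx
  have hflat : ∀ᶠ x in 𝓝 0, HasDerivAt (fun t => G (t, ψ t)) 0 x := by
    filter_upwards [hball, hne, eventually_eventually_nhds.mpr (hball.mono hi)]
      with x hx₀ hnex hix
    exact hasDerivAt_comp_graph_eq_zero (hG.differentiableAt (hU.mem_nhds (hgraph x hx₀)))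
      (hH.differentiableAt (hU.mem_nhds (hgraph x hx₀)))
      (hψ.differentiableAt (isOpen_ball.mem_nhds hx₀)) hix (hii x hx₀) hnex
  obtain ⟨ε, hε, hconst⟩ := exists_ball_eq_of_eventually_hasDerivAt_zero hflat
  exact ⟨ε, hε, fun x hx => by simpa [hψ0, hG0] using hconst x hx⟩

/-- The key local computation in the super-saddle analysis: let `U ⊆ ℂ²` be an open
neighborhood of `(0,0)`, let `G, H : U → ℂ` be holomorphic with `G(0,0) = 0`,
`H(0,0) = 0`, and total derivative of `H` vanishing at `(0,0)`, and let `λ, a ∈ ℂ`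
with `|λ| > 1`.  If `ψ` is holomorphic on `{|x| < ε₀}` with `ψ 0 = 0`, its graph lies
in `U`, and for all `|x| < ε₀`:
(i) `λ·ψ(x) + a·x + H(x, ψ(x)) = 0`, and
(ii) `∂G/∂x(x,ψ(x))·(λ + ∂H/∂y(x,ψ(x))) − ∂G/∂y(x,ψ(x))·(a + ∂H/∂x(x,ψ(x))) = 0`,
then `G(x, ψ(x)) = 0` for all `x` in some disk `{|x| < ε}`. -/
theorem critical_graph_in_zero_locus
    (U : Set (ℂ × ℂ)) (hU : IsOpen U) (h0U : ((0 : ℂ), (0 : ℂ)) ∈ U)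
    (G H : ℂ × ℂ → ℂ)
    (hG : DifferentiableOn ℂ G U) (hH : DifferentiableOn ℂ H U)
    (hG0 : G (0, 0) = 0) (hH0 : H (0, 0) = 0)
    (hH'0 : fderiv ℂ H (0, 0) = 0)
    (lam a : ℂ) (hlam : 1 < ‖lam‖)
    (ε₀ : ℝ) (hε₀ : 0 < ε₀)
    (ψ : ℂ → ℂ) (hψ : DifferentiableOn ℂ ψ (ball (0 : ℂ) ε₀))
    (hψ0 : ψ 0 = 0)
    (hgraph : ∀ x ∈ ball (0 : ℂ) ε₀, (x, ψ x) ∈ U)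
    (hi : ∀ x ∈ ball (0 : ℂ) ε₀, lam * ψ x + a * x + H (x, ψ x) = 0)
    (hii : ∀ x ∈ ball (0 : ℂ) ε₀,
      deriv (fun t => G (t, ψ x)) x * (lam + deriv (fun t => H (x, t)) (ψ x))
        - deriv (fun t => G (x, t)) (ψ x) * (a + deriv (fun t => H (t, ψ x)) x) = 0) :
    ∃ ε > 0, ∀ x ∈ ball (0 : ℂ) ε, G (x, ψ x) = 0 :=
  critical_graph_in_zero_locus_general U hU G H hG hH hG0 hH'0 lam a hlam ε₀ hε₀ ψ hψ hψ0 hgraph hi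
    hii
end

section
/- Let 𝔻 = { z ∈ ℂ : |z| < 1 } be the open unit disk, let Z be a topological space, let Φ : 𝔻 → Z be a continuous map, and let x ∈ Z. Suppose there exists an open neighborhood U of x in Z such that every connected component of Φ⁻¹(U) has compact closure contained in 𝔻 (i.e., every connected component of Φ⁻¹(U) is relatively compact in 𝔻). Then for every θ ∈ ℝ, the radial limit lim_{r → 1⁻} Φ(r·e^{iθ}) does not equal x; that is, it is not the case that Φ(r·e^{iθ}) → x as r → 1 from the left. -/
open Metric Filter Set Topology

/-! The radial segment `r ↦ r e^{iθ}`, `r₀ ≤ r < 1`, eventually lies in `𝔻 ∩ Φ⁻¹(U)` if the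
radial limit is `x`. Being connected, it lies in a single component of `𝔻 ∩ Φ⁻¹(U)`, so the
closure of that component contains the boundary point `e^{iθ}` and is not contained in `𝔻`. -/

theorem mem_closure_connectedComponentIn_of_tendsto_nhdsLT
    {α X : Type*} [ConditionallyCompleteLinearOrder α] [TopologicalSpace α] [OrderTopology α]
    [DenselyOrdered α] [TopologicalSpace X] {γ : α → X} {S : Set X} {r t : α} {p : X}
    (hrt : r < t) (hγ : ContinuousOn γ (Ico r t)) (hγS : MapsTo γ (Ico r t) S)
    (hlim : Tendsto γ (𝓝[<] t) (𝓝 p)) :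
    p ∈ closure (connectedComponentIn S (γ r)) := by
  have hsub : γ '' Ico r t ⊆ connectedComponentIn S (γ r) :=
    (isPreconnected_Ico.image γ hγ).subset_connectedComponentIn
      (mem_image_of_mem γ (left_mem_Ico.mpr hrt)) hγS.image_subset
  have : (𝓝[<] t).NeBot := nhdsLT_neBot_of_exists_lt ⟨r, hrt⟩
  exact closure_mono hsub <| mem_closure_of_tendsto hlim <|
    mem_of_superset (Ico_mem_nhdsLT hrt) fun s hs => mem_image_of_mem γ hs

theorem norm_ofReal_mul_exp_ofReal_mul_I (r θ : ℝ) :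
    ‖(r : ℂ) * Complex.exp (θ * Complex.I)‖ = |r| := by
  simp [Complex.norm_exp_ofReal_mul_I]

theorem radial_limit_avoids_relatively_compact_preimage_general
    {Z : Type*} [TopologicalSpace Z]
    (Φ : ℂ → Z)
    (x : Z) (U : Set Z) (hUopen : IsOpen U) (hxU : x ∈ U)
    (hcomp : ∀ z ∈ ball (0 : ℂ) 1 ∩ Φ ⁻¹' U,
      IsCompact (closure (connectedComponentIn (ball (0 : ℂ) 1 ∩ Φ ⁻¹' U) z)) ∧
      closure (connectedComponentIn (ball (0 : ℂ) 1 ∩ Φ ⁻¹' U) z) ⊆ ball (0 : ℂ) 1)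
    (θ : ℝ) :
    ¬ Tendsto (fun r : ℝ => Φ ((r : ℂ) * Complex.exp (θ * Complex.I)))
        (nhdsWithin 1 (Set.Iio 1)) (nhds x) := by
  intro hlim
  set γ : ℝ → ℂ := fun r => (r : ℂ) * Complex.exp (θ * Complex.I)
  have hγ : Continuous γ := by fun_prop
  have hγ_disk : ∀ r ∈ Ioo (0 : ℝ) 1, γ r ∈ ball (0 : ℂ) 1 := fun r hr => by
    rw [mem_ball_zero_iff, norm_ofReal_mul_exp_ofReal_mul_I, abs_of_pos hr.1]
    exact hr.2
  have hevent : ∀ᶠ r in 𝓝[<] (1 : ℝ), γ r ∈ ball (0 : ℂ) 1 ∩ Φ ⁻¹' U := by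
    filter_upwards [Ioo_mem_nhdsLT one_pos, hlim (hUopen.mem_nhds hxU)] with r hr hrU
    exact ⟨hγ_disk r hr, hrU⟩
  obtain ⟨r₀, hr₀, hr₀S⟩ := mem_nhdsLT_iff_exists_Ico_subset.mp hevent
  have hboundary : γ 1 ∈ closure (connectedComponentIn (ball (0 : ℂ) 1 ∩ Φ ⁻¹' U) (γ r₀)) :=
    mem_closure_connectedComponentIn_of_tendsto_nhdsLT hr₀ hγ.continuousOn
      (fun r hr => hr₀S hr) ((hγ.tendsto 1).mono_left nhdsWithin_le_nhds)
  have hγ1_disk := (hcomp (γ r₀) (hr₀S (left_mem_Ico.mpr hr₀))).2 hboundary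
  rw [mem_ball_zero_iff, norm_ofReal_mul_exp_ofReal_mul_I] at hγ1_disk
  norm_num at hγ1_disk

/-- Let `Φ` be a continuous map from the open unit disk `𝔻 ⊆ ℂ` to a topological
space `Z`, and let `x ∈ Z`.  If there is an open neighborhood `U` of `x` such that
every connected component of `Φ⁻¹(U)` (inside `𝔻`) is relatively compact in `𝔻`
(its closure is compact and contained in `𝔻`), then for every `θ ∈ ℝ` the radial
limit `lim_{r → 1⁻} Φ(r·e^{iθ})` is not equal to `x`. -/
theorem radial_limit_avoids_relatively_compact_preimage
    {Z : Type*} [TopologicalSpace Z]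
    (Φ : ℂ → Z) (hΦ : ContinuousOn Φ (ball (0 : ℂ) 1))
    (x : Z) (U : Set Z) (hUopen : IsOpen U) (hxU : x ∈ U)
    (hcomp : ∀ z ∈ ball (0 : ℂ) 1 ∩ Φ ⁻¹' U,
      IsCompact (closure (connectedComponentIn (ball (0 : ℂ) 1 ∩ Φ ⁻¹' U) z)) ∧
      closure (connectedComponentIn (ball (0 : ℂ) 1 ∩ Φ ⁻¹' U) z) ⊆ ball (0 : ℂ) 1)
    (θ : ℝ) :
    ¬ Tendsto (fun r : ℝ => Φ ((r : ℂ) * Complex.exp (θ * Complex.I)))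
        (nhdsWithin 1 (Set.Iio 1)) (nhds x) :=
  radial_limit_avoids_relatively_compact_preimage_general Φ x U hUopen hxU hcomp θ
end
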